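/- Let P ⊆ ℝ^d be a full-dimensional lattice polytope with codegree a. If P is nearly Gorenstein, then every lattice point of P decomposes, i.e. P ∩ ℤ^d = (⌊aP⌋ ∩ ℤ^d) + ({P} ∩ ℤ^d). -/

import Mathlib

open Set Pointwise

/-- The set of lattice points of `ℝ^d`. -/
def latticePoints (d : ℕ) : Set (Fin d → ℝ) :=
  {x | ∀ i, ∃ z : ℤ, x i = (z : ℝ)}

/-- A lattice polytope: the convex hull of a finite set of lattice points. -/
def IsLatticePolytope {d : ℕ} (P : Set (Fin d → ℝ)) : Prop :=
  ∃ V : Finset (Fin d → ℝ), (V : Set (Fin d → ℝ)) ⊆ latticePoints d ∧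
    P = convexHull ℝ (V : Set (Fin d → ℝ))

/-- The natural pairing of an integral linear functional with a point of `ℝ^d`. -/
def pairing {d : ℕ} (n : Fin d → ℤ) (x : Fin d → ℝ) : ℝ :=
  ∑ i, (n i : ℝ) * x i

/-- `P = {x | n_F(x) ≥ -h_F}` is an irredundant presentation with primitive
integral inner normals, i.e. the facet presentation of `P`. -/
def IsFacetPresentation {d m : ℕ} (P : Set (Fin d → ℝ))
    (n : Fin m → Fin d → ℤ) (h : Fin m → ℤ) : Prop :=
  P = {x | ∀ i, pairing (n i) x ≥ -(h i : ℝ)} ∧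
  (∀ i, Finset.univ.gcd (n i) = 1) ∧
  (∀ i, ∃ x : Fin d → ℝ, pairing (n i) x < -(h i : ℝ) ∧
    ∀ j, j ≠ i → pairing (n j) x ≥ -(h j : ℝ))

/-- `a` is the codegree of `P`: the least `k ≥ 1` such that `int(kP)` contains
a lattice point. -/
def IsCodegree {d : ℕ} (P : Set (Fin d → ℝ)) (a : ℕ) : Prop :=
  1 ≤ a ∧ (interior ((a : ℝ) • P) ∩ latticePoints d).Nonempty ∧
    ∀ k : ℕ, 1 ≤ k → (interior ((k : ℝ) • P) ∩ latticePoints d).Nonempty → a ≤ k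

/-- The floor polytope `⌊R⌋ = conv(int(R) ∩ ℤ^d)`. -/
def floorPoly {d : ℕ} (R : Set (Fin d → ℝ)) : Set (Fin d → ℝ) :=
  convexHull ℝ (interior R ∩ latticePoints d)

/-- The remainder polytope `{P} = conv{x ∈ ℤ^d | n_F(x) ≥ (a-1)h_F - 1}`,
defined in terms of the facet presentation data and the codegree `a`. -/
def remPoly {d m : ℕ} (n : Fin m → Fin d → ℤ) (h : Fin m → ℤ) (a : ℕ) :
    Set (Fin d → ℝ) :=
  convexHull ℝ {x | x ∈ latticePoints d ∧
    ∀ i, pairing (n i) x ≥ ((a : ℝ) - 1) * (h i : ℝ) - 1}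

/-- The cone `C_P ⊆ ℝ^d × ℝ` over `P`, in terms of the facet presentation. -/
def coneOver {d m : ℕ} (n : Fin m → Fin d → ℤ) (h : Fin m → ℤ) :
    Set ((Fin d → ℝ) × ℝ) :=
  {p | ∀ i, pairing (n i) p.1 ≥ -(p.2 * (h i : ℝ))}

/-- The interior `int(C_P)` of the cone over `P`. -/
def intCone {d m : ℕ} (n : Fin m → Fin d → ℤ) (h : Fin m → ℤ) :
    Set ((Fin d → ℝ) × ℝ) :=
  {p | ∀ i, pairing (n i) p.1 > -(p.2 * (h i : ℝ))}

/-- The anticanonical set `ant(C_P)` of the cone over `P`. -/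
def antCone {d m : ℕ} (n : Fin m → Fin d → ℤ) (h : Fin m → ℤ) :
    Set ((Fin d → ℝ) × ℝ) :=
  {p | ∀ i, pairing (n i) p.1 ≥ -(p.2 * (h i : ℝ)) - 1}

/-- Lattice points of `ℝ^d × ℝ = ℝ^{d+1}`. -/
def latticePairs (d : ℕ) : Set ((Fin d → ℝ) × ℝ) :=
  {p | p.1 ∈ latticePoints d ∧ ∃ z : ℤ, p.2 = (z : ℝ)}

/-- The nearly Gorenstein condition with respect to a given facet presentation:
`(C_P ∩ ℤ^{d+1}) \ {0} ⊆ (int(C_P) ∩ ℤ^{d+1}) + (ant(C_P) ∩ ℤ^{d+1})`. -/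
def NGIncl {d m : ℕ} (n : Fin m → Fin d → ℤ) (h : Fin m → ℤ) : Prop :=
  (coneOver n h ∩ latticePairs d) \ {(0 : (Fin d → ℝ) × ℝ)} ⊆
    (intCone n h ∩ latticePairs d) + (antCone n h ∩ latticePairs d)

/-- A full-dimensional lattice polytope is nearly Gorenstein if the nearly
Gorenstein inclusion holds for its facet presentation. -/
def NearlyGorenstein {d : ℕ} (P : Set (Fin d → ℝ)) : Prop :=
  ∃ (m : ℕ) (n : Fin m → Fin d → ℤ) (h : Fin m → ℤ),
    IsFacetPresentation P n h ∧ NGIncl n h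

/-- The polar dual `Q* = {y | y(x) ≥ -1 for all x ∈ Q}`. -/
def polarDual {d : ℕ} (Q : Set (Fin d → ℝ)) : Set (Fin d → ℝ) :=
  {y | ∀ x ∈ Q, (∑ i, y i * x i) ≥ -1}

/-- A reflexive polytope: a lattice polytope with `0` in its interior whose
polar dual is again a lattice polytope. -/
def IsReflexive {d : ℕ} (Q : Set (Fin d → ℝ)) : Prop :=
  IsLatticePolytope Q ∧ (0 : Fin d → ℝ) ∈ interior Q ∧
    IsLatticePolytope (polarDual Q)

/-- A Gorenstein polytope: some dilate `kP`, translated by a lattice vector,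
is reflexive. -/
def IsGorenstein {d : ℕ} (P : Set (Fin d → ℝ)) : Prop :=
  ∃ (k : ℕ) (w : Fin d → ℝ), 1 ≤ k ∧ w ∈ latticePoints d ∧
    IsReflexive ((fun x => x - w) '' ((k : ℝ) • P))

/-- The integer decomposition property. -/
def IsIDP {d : ℕ} (P : Set (Fin d → ℝ)) : Prop :=
  ∀ k : ℕ, 1 ≤ k → ∀ x ∈ ((k : ℝ) • P) ∩ latticePoints d,
    ∃ y : Fin k → Fin d → ℝ, (∀ j, y j ∈ P ∩ latticePoints d) ∧ x = ∑ j, y j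

/-- Minkowski indecomposability of a lattice polytope. -/
def IsIndecomposable {d : ℕ} (P : Set (Fin d → ℝ)) : Prop :=
  (¬ ∃ p : Fin d → ℝ, P = {p}) ∧
  ∀ P₁ P₂ : Set (Fin d → ℝ), IsLatticePolytope P₁ → IsLatticePolytope P₂ →
    P = P₁ + P₂ → (∃ p, P₁ = {p}) ∨ (∃ p, P₂ = {p})

/-- A `(0,1)`-polytope: the convex hull of a set of `(0,1)`-vectors. -/
def Is01Polytope {d : ℕ} (P : Set (Fin d → ℝ)) : Prop :=
  ∃ V : Finset (Fin d → ℝ), (∀ v ∈ V, ∀ i, v i = 0 ∨ v i = 1) ∧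
    P = convexHull ℝ (V : Set (Fin d → ℝ))

/-!
Write a lattice point `x ∈ P` as the lattice point `(x, 1)` of `C_P` and split it, by the nearly
Gorenstein property, as `(q, k) + (r, 1 - k)` with `(q, k) ∈ int(C_P)` and `(r, 1 - k) ∈ ant(C_P)`.
As `P` is bounded, `C_P` meets the half-space `{t ≤ 0}` only in the origin, so `k ≥ 1`, and then
`k ≥ a` by minimality of the codegree. If `k = a`, then `q ∈ int(aP)` and `r ∈ {P}`. If `k > a`, adding
an interior lattice point `(y, a)` of `C_P` to `(r, 1 - k)` gives a point of `C_P` at height `≤ 0`,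
which forces `r = -y` and `k = a + 1`; then `x = y + (x + r)` with `x + r ∈ {P}`. The reverse
inclusion is the facet-wise identity `(-a h_F + 1) + ((a - 1) h_F - 1) = -h_F`.
-/

section Pairing

variable {d : ℕ}

def pairingₗ (v : Fin d → ℤ) : Module.Dual ℝ (Fin d → ℝ) :=
  dotProductBilin ℝ ℝ fun i => (v i : ℝ)

@[simp]
lemma pairingₗ_apply (v : Fin d → ℤ) (x : Fin d → ℝ) : pairingₗ v x = pairing v x := rfl

lemma pairing_add (v : Fin d → ℤ) (x y : Fin d → ℝ) :
    pairing v (x + y) = pairing v x + pairing v y :=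
  map_add (pairingₗ v) x y

lemma pairing_sub (v : Fin d → ℤ) (x y : Fin d → ℝ) :
    pairing v (x - y) = pairing v x - pairing v y :=
  map_sub (pairingₗ v) x y

lemma pairing_smul (v : Fin d → ℤ) (c : ℝ) (x : Fin d → ℝ) :
    pairing v (c • x) = c * pairing v x :=
  map_smul (pairingₗ v) c x

lemma pairing_single (v : Fin d → ℤ) (j : Fin d) : pairing v (Pi.single j 1) = v j := by
  simp [pairing, Pi.single_apply]

lemma isOpenMap_pairing {v : Fin d → ℤ} (hv : v ≠ 0) : IsOpenMap (pairing v) := by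
  obtain ⟨j, hj⟩ := Function.ne_iff.mp hv
  have hne : pairingₗ v ≠ 0 := fun h0 => hj <| by
    have := LinearMap.congr_fun h0 (Pi.single j 1)
    rw [pairingₗ_apply, pairing_single, LinearMap.zero_apply] at this
    exact_mod_cast this
  exact (pairingₗ v).isOpenMap_of_finiteDimensional (LinearMap.surjective hne)

lemma continuous_pairing (v : Fin d → ℤ) : Continuous (pairing v) :=
  (pairingₗ v).continuous_of_finiteDimensional

lemma pairing_ge_of_mem_convexHull {v : Fin d → ℤ} {s : Set (Fin d → ℝ)} {b : ℝ}
    (hs : ∀ y ∈ s, b ≤ pairing v y) {x : Fin d → ℝ} (hx : x ∈ convexHull ℝ s) :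
    b ≤ pairing v x :=
  convexHull_min hs (convex_halfSpace_ge (pairingₗ v).isLinear b) hx

lemma add_mem_latticePoints {x y : Fin d → ℝ} (hx : x ∈ latticePoints d)
    (hy : y ∈ latticePoints d) : x + y ∈ latticePoints d := fun i => by
  obtain ⟨a, ha⟩ := hx i
  obtain ⟨b, hb⟩ := hy i
  exact ⟨a + b, by simp [ha, hb]⟩

lemma exists_pairing_eq_intCast (v : Fin d → ℤ) {x : Fin d → ℝ} (hx : x ∈ latticePoints d) :
    ∃ z : ℤ, pairing v x = z := by
  choose z hz using hx
  exact ⟨∑ i, v i * z i, by simp [pairing, hz]⟩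

lemma intCast_add_one_le_pairing (v : Fin d → ℤ) {x : Fin d → ℝ} (hx : x ∈ latticePoints d)
    {b : ℤ} (hb : (b : ℝ) < pairing v x) : (b : ℝ) + 1 ≤ pairing v x := by
  obtain ⟨z, hz⟩ := exists_pairing_eq_intCast v hx
  rw [hz] at hb ⊢
  exact_mod_cast Int.add_one_le_of_lt (by exact_mod_cast hb)

end Pairing

section FacetPresentation

variable {d m : ℕ} {P : Set (Fin d → ℝ)} {n : Fin m → Fin d → ℤ} {h : Fin m → ℤ}

lemma interior_setOf_forall_pairing_ge (hn : ∀ i, n i ≠ 0) (b : Fin m → ℝ) :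
    interior {x : Fin d → ℝ | ∀ i, pairing (n i) x ≥ b i} =
      {x | ∀ i, pairing (n i) x > b i} := by
  have hiInter : {x : Fin d → ℝ | ∀ i, pairing (n i) x ≥ b i} =
      ⋂ i, pairing (n i) ⁻¹' Ici (b i) := by
    ext; simp
  have hinterior (i : Fin m) :
      interior (pairing (n i) ⁻¹' Ici (b i)) = pairing (n i) ⁻¹' Ioi (b i) := by
    rw [← (isOpenMap_pairing (hn i)).preimage_interior_eq_interior_preimage
      (continuous_pairing _), interior_Ici]
  rw [hiInter, interior_iInter_of_finite]
  ext
  simp [hinterior]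

lemma smul_eq_setOf_forall_pairing_ge (hP : P = {x | ∀ i, pairing (n i) x ≥ -(h i : ℝ)})
    {c : ℝ} (hc : 0 < c) : c • P = {x | ∀ i, pairing (n i) x ≥ -(c * (h i : ℝ))} := by
  ext x
  rw [mem_smul_set_iff_inv_smul_mem₀ hc.ne', hP]
  simp only [mem_ofPred_eq, pairing_smul, ge_iff_le, inv_mul_eq_div, le_div_iff₀ hc, neg_mul,
    mul_comm c]

lemma mem_interior_smul_iff_mem_intCone (hP : P = {x | ∀ i, pairing (n i) x ≥ -(h i : ℝ)})
    (hn : ∀ i, n i ≠ 0) {c : ℝ} (hc : 0 < c) {x : Fin d → ℝ} :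
    x ∈ interior (c • P) ↔ (x, c) ∈ intCone n h := by
  rw [smul_eq_setOf_forall_pairing_ge hP hc, interior_setOf_forall_pairing_ge hn]
  rfl

lemma add_one_le_pairing_of_mem_intCone {k : ℕ} {y : Fin d → ℝ} (hy : (y, (k : ℝ)) ∈ intCone n h)
    (hyZ : y ∈ latticePoints d) (i : Fin m) : -((k : ℝ) * h i) + 1 ≤ pairing (n i) y := by
  have := intCast_add_one_le_pairing (n i) hyZ (b := -(k * h i)) (by push_cast; exact hy i)
  push_cast at this
  exact this

lemma nonempty_fin_of_isBounded (hd : 1 ≤ d)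
    (hP : P = {x | ∀ i, pairing (n i) x ≥ -(h i : ℝ)}) (hbdd : Bornology.IsBounded P) :
    Nonempty (Fin m) := by
  by_contra hm
  rw [not_nonempty_iff] at hm
  have : Nonempty (Fin d) := ⟨⟨0, hd⟩⟩
  exact NormedSpace.unbounded_univ ℝ (Fin d → ℝ) (by simpa [hP] using hbdd)

lemma eq_zero_of_forall_pairing_nonneg (hP : P = {x | ∀ i, pairing (n i) x ≥ -(h i : ℝ)})
    (hbdd : Bornology.IsBounded P) {p : Fin d → ℝ} (hp : p ∈ P) {w : Fin d → ℝ}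
    (hw : ∀ i, 0 ≤ pairing (n i) w) : w = 0 := by
  obtain ⟨M, hM⟩ := hbdd.exists_norm_le
  have hray (t : ℝ) (ht : 0 ≤ t) : t * ‖w‖ ≤ 2 * M := by
    have hmem : p + t • w ∈ P := by
      rw [hP] at hp ⊢
      intro i
      rw [pairing_add, pairing_smul]
      nlinarith [hp i, hw i]
    calc t * ‖w‖ = ‖(p + t • w) - p‖ := by
          rw [add_sub_cancel_left, norm_smul, Real.norm_of_nonneg ht]
      _ ≤ ‖p + t • w‖ + ‖p‖ := norm_sub_le _ _
      _ ≤ 2 * M := by linarith [hM _ hmem, hM p hp]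
  by_contra hw0
  have hwpos : 0 < ‖w‖ := norm_pos_iff.mpr hw0
  have hM0 : 0 ≤ M := (norm_nonneg p).trans (hM p hp)
  have := hray ((2 * M + 1) / ‖w‖) (by positivity)
  rw [div_mul_cancel₀ _ hwpos.ne'] at this
  linarith

lemma eq_zero_of_mem_coneOver_of_nonpos [Nonempty (Fin m)]
    (hP : P = {x | ∀ i, pairing (n i) x ≥ -(h i : ℝ)}) (hbdd : Bornology.IsBounded P)
    {v : Fin d → ℝ} (hv : (v, 1) ∈ intCone n h) {p : (Fin d → ℝ) × ℝ}
    (hp : p ∈ coneOver n h) (ht : p.2 ≤ 0) : p = 0 := by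
  obtain ⟨w, t⟩ := p
  have hv' (i : Fin m) : pairing (n i) v > -(h i : ℝ) := by simpa using hv i
  have hvP : v ∈ P := hP ▸ fun i => (hv' i).le
  have hw : w = t • v := by
    rw [← sub_eq_zero]
    refine eq_zero_of_forall_pairing_nonneg hP hbdd hvP fun i => ?_
    rw [pairing_sub, pairing_smul]
    nlinarith [hp i, hv' i]
  obtain rfl : t = 0 := by
    refine le_antisymm ht (not_lt.mp fun ht0 => ?_)
    obtain ⟨i⟩ := ‹Nonempty (Fin m)›
    have := hp i
    simp only [hw, pairing_smul] at this
    nlinarith [hv' i]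
  simp [hw]

lemma pos_of_mem_intCone [Nonempty (Fin m)]
    (hP : P = {x | ∀ i, pairing (n i) x ≥ -(h i : ℝ)}) (hbdd : Bornology.IsBounded P)
    {v : Fin d → ℝ} (hv : (v, 1) ∈ intCone n h) {p : (Fin d → ℝ) × ℝ}
    (hp : p ∈ intCone n h) : 0 < p.2 := by
  by_contra! ht
  obtain rfl := eq_zero_of_mem_coneOver_of_nonpos hP hbdd hv (fun i => (hp i).le) ht
  obtain ⟨i⟩ := ‹Nonempty (Fin m)›
  simpa [pairing] using hp i

end FacetPresentation

section Decomposition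

variable {d m : ℕ} {P : Set (Fin d → ℝ)} {n : Fin m → Fin d → ℤ} {h : Fin m → ℤ} {a : ℕ}

lemma IsCodegree.le_of_mem_intCone (ha : IsCodegree P a)
    (hP : P = {x | ∀ i, pairing (n i) x ≥ -(h i : ℝ)}) (hn : ∀ i, n i ≠ 0)
    {q : (Fin d → ℝ) × ℝ} (hq : q ∈ intCone n h ∩ latticePairs d) (hpos : 0 < q.2) :
    (a : ℝ) ≤ q.2 := by
  obtain ⟨q, t⟩ := q
  obtain ⟨hq, hqZ, k, rfl⟩ := hq
  dsimp only at hpos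
  lift k to ℕ using by exact_mod_cast hpos.le
  push_cast at hpos hq ⊢
  have hint : q ∈ interior ((k : ℝ) • P) :=
    (mem_interior_smul_iff_mem_intCone hP hn hpos).mpr hq
  exact_mod_cast ha.2.2 k (by exact_mod_cast hpos) ⟨q, hint, hqZ⟩

lemma add_mem_floorPoly_add_remPoly {y z : Fin d → ℝ}
    (hy : y ∈ interior ((a : ℝ) • P) ∩ latticePoints d) (hz : z ∈ latticePoints d)
    (hzn : ∀ i, pairing (n i) z ≥ ((a : ℝ) - 1) * (h i : ℝ) - 1) :
    y + z ∈ (floorPoly ((a : ℝ) • P) ∩ latticePoints d) + (remPoly n h a ∩ latticePoints d) :=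
  add_mem_add ⟨subset_convexHull ℝ _ hy, hy.2⟩ ⟨subset_convexHull ℝ _ ⟨hz, hzn⟩, hz⟩

lemma floorPoly_add_remPoly_subset (hP : P = {x | ∀ i, pairing (n i) x ≥ -(h i : ℝ)})
    (hn : ∀ i, n i ≠ 0) (ha : 1 ≤ a) :
    (floorPoly ((a : ℝ) • P) ∩ latticePoints d) + (remPoly n h a ∩ latticePoints d) ⊆
      P ∩ latticePoints d := by
  rintro _ ⟨y, ⟨hy, hyZ⟩, z, ⟨hz, hzZ⟩, rfl⟩
  have hapos : (0 : ℝ) < a := by exact_mod_cast ha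
  refine ⟨?_, add_mem_latticePoints hyZ hzZ⟩
  rw [hP]
  intro i
  have hyi : -((a : ℝ) * h i) + 1 ≤ pairing (n i) y :=
    pairing_ge_of_mem_convexHull (fun w hw => add_one_le_pairing_of_mem_intCone
      ((mem_interior_smul_iff_mem_intCone hP hn hapos).mp hw.1) hw.2 i) hy
  have hzi : ((a : ℝ) - 1) * h i - 1 ≤ pairing (n i) z :=
    pairing_ge_of_mem_convexHull (fun w hw => hw.2 i) hz
  rw [pairing_add]
  linarith

lemma eq_neg_of_mem_antCone_of_add_nonpos [Nonempty (Fin m)]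
    (hP : P = {x | ∀ i, pairing (n i) x ≥ -(h i : ℝ)}) (hbdd : Bornology.IsBounded P)
    (hn : ∀ i, n i ≠ 0) {v : Fin d → ℝ} (hv : (v, 1) ∈ intCone n h) (ha : 1 ≤ a)
    {y : Fin d → ℝ} (hy : y ∈ interior ((a : ℝ) • P) ∩ latticePoints d)
    {r : Fin d → ℝ} {l : ℝ} (hr : (r, l) ∈ antCone n h) (hla : l + a ≤ 0) :
    r = -y ∧ l = -a := by
  have hyn := add_one_le_pairing_of_mem_intCone
    ((mem_interior_smul_iff_mem_intCone hP hn (by exact_mod_cast ha)).mp hy.1) hy.2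
  have hry : (r + y, l + a) = 0 :=
    eq_zero_of_mem_coneOver_of_nonpos hP hbdd hv (fun i => by
      dsimp only
      rw [pairing_add]
      linarith [hr i, hyn i]) hla
  simp only [Prod.mk_eq_zero] at hry
  exact ⟨eq_neg_of_add_eq_zero_left hry.1, by linarith [hry.2]⟩

lemma subset_floorPoly_add_remPoly (hd : 1 ≤ d)
    (hP : P = {x | ∀ i, pairing (n i) x ≥ -(h i : ℝ)}) (hbdd : Bornology.IsBounded P)
    (hn : ∀ i, n i ≠ 0) {v : Fin d → ℝ} (hv : (v, 1) ∈ intCone n h) (ha : IsCodegree P a)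
    (hng : NGIncl n h) :
    P ∩ latticePoints d ⊆
      (floorPoly ((a : ℝ) • P) ∩ latticePoints d) + (remPoly n h a ∩ latticePoints d) := by
  have := nonempty_fin_of_isBounded hd hP hbdd
  rintro x ⟨hxP, hxZ⟩
  rw [hP] at hxP
  have hx1 : (x, (1 : ℝ)) ∈ (coneOver n h ∩ latticePairs d) \ {0} :=
    ⟨⟨fun i => by simpa using hxP i, hxZ, 1, by simp⟩, by simp⟩
  obtain ⟨⟨q, k⟩, hqC, ⟨r, l⟩, ⟨hr, hrZ, l, rfl⟩, hqr⟩ := hng hx1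
  simp only [Prod.mk_add_mk, Prod.mk.injEq] at hqr
  obtain ⟨rfl, hkl⟩ := hqr
  have hk : 0 < k := pos_of_mem_intCone hP hbdd hv hqC.1
  rcases (ha.le_of_mem_intCone hP hn hqC hk).eq_or_lt with rfl | hak
  · refine add_mem_floorPoly_add_remPoly
      ⟨(mem_interior_smul_iff_mem_intCone hP hn hk).mpr hqC.1, hqC.2.1⟩ hrZ fun i => ?_
    have := hr i
    rw [show (l : ℝ) = 1 - a by linarith] at this
    linarith
  · have hla : (l : ℝ) + a ≤ 0 := by
      have : (a : ℤ) < 1 - l := by exact_mod_cast (show (a : ℝ) < 1 - l by linarith)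
      exact_mod_cast (show l + (a : ℤ) ≤ 0 by omega)
    obtain ⟨y, hy⟩ := ha.2.1
    obtain ⟨hry, hl⟩ := eq_neg_of_mem_antCone_of_add_nonpos hP hbdd hn hv ha.1 hy hr hla
    rw [show q + r = y + (q + r + r) by rw [hry]; abel]
    refine add_mem_floorPoly_add_remPoly hy (add_mem_latticePoints hxZ hrZ) fun i => ?_
    have := hr i
    rw [hl] at this
    rw [pairing_add]
    linarith [hxP i]

end Decomposition

theorem stmt_3 {d : ℕ} (hd : 1 ≤ d) (P : Set (Fin d → ℝ))
    (hP : IsLatticePolytope P) (hfull : (interior P).Nonempty)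
    {m : ℕ} (n : Fin m → Fin d → ℤ) (h : Fin m → ℤ)
    (hpres : IsFacetPresentation P n h)
    (a : ℕ) (ha : IsCodegree P a)
    (hng : NGIncl n h) :
    P ∩ latticePoints d =
      (floorPoly ((a : ℝ) • P) ∩ latticePoints d) +
        (remPoly n h a ∩ latticePoints d) := by
  obtain ⟨hPeq, hgcd, -⟩ := hpres
  have hn (i : Fin m) : n i ≠ 0 := fun h0 => one_ne_zero <|
    (hgcd i).symm.trans (Finset.gcd_eq_zero_iff.mpr fun j _ => by simp [h0])
  obtain ⟨V, -, hPV⟩ := hP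
  have hbdd : Bornology.IsBounded P := hPV ▸ (V.finite_toSet.isCompact_convexHull ℝ).isBounded
  obtain ⟨v, hv⟩ := hfull
  have hv1 : (v, 1) ∈ intCone n h :=
    (mem_interior_smul_iff_mem_intCone hPeq hn one_pos).mp (by rwa [one_smul])
  exact (subset_floorPoly_add_remPoly hd hPeq hbdd hn hv1 ha hng).antisymm
    (floorPoly_add_remPoly_subset hPeq hn ha.1)
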